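/- Let {q_k} be a nonincreasing nonnegative sequence with q_0 > 0 satisfying n ≤ C·Q_n for all n ≥ 1 (where Q_n := ∑_{j=0}^{n-1} q_j), and let (α_j) be nonnegative reals with α_j → 0. Then (1/Q_n)·∑_{j=1}^{n-2} (q_{n-j-1} − q_{n-j})·j·α_j + (q_0·n/Q_n)·α_n → 0 as n → ∞. -/
import Mathlib


open Finset Filter

lemma tele_eq (q : ℕ → ℝ) (n : ℕ) :
    ∀ b a : ℕ, a ≤ b → b + 2 ≤ n →
      ∑ j ∈ Finset.Ioc a b, (q (n - j - 1) - q (n - j)) = q (n - b - 1) - q (n - a - 1) := by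
  intro b
  induction b with
  | zero =>
    intro a ha _
    interval_cases a
    simp
  | succ b ih =>
    intro a ha hn
    rcases Nat.lt_or_ge a (b + 1) with h | h
    · have ha' : a ≤ b := Nat.lt_succ_iff.1 h
      rw [Finset.sum_Ioc_succ_top ha', ih a ha' (by omega)]
      have e1 : n - (b + 1) - 1 = n - b - 2 := by omega
      have e2 : n - (b + 1) = n - b - 1 := by omega
      rw [e1, e2]
      ring
    · have : a = b + 1 := by omega
      subst this
      simp

/-- Averaging lemma for nonincreasing Nörlund weights satisfying `n ≤ C·Q_n`. -/
theorem stmt_12 (q : ℕ → ℝ) (hq : ∀ k, 0 ≤ q k) (hq0 : 0 < q 0) (hanti : Antitone q)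
    (Q : ℕ → ℝ) (hQ : ∀ n, Q n = ∑ j ∈ Finset.range n, q j)
    (C : ℝ) (hreg : ∀ n : ℕ, 1 ≤ n → (n : ℝ) ≤ C * Q n)
    (a : ℕ → ℝ) (ha : ∀ j, 0 ≤ a j) (halim : Filter.Tendsto a Filter.atTop (nhds 0)) :
    Filter.Tendsto
      (fun n : ℕ =>
        (1 / Q n) * (∑ j ∈ Finset.Icc 1 (n - 2), (q (n - j - 1) - q (n - j)) * (j : ℝ) * a j)
          + (q 0 * (n : ℝ) / Q n) * a n)
      Filter.atTop (nhds 0) := by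
  -- Basic facts
  have hQ1 : Q 1 = q 0 := by simp [hQ]
  have hC : 0 < C := by
    have h := hreg 1 le_rfl
    rw [hQ1] at h
    push_cast at h
    nlinarith
  have hQpos : ∀ n : ℕ, 1 ≤ n → 0 < Q n := by
    intro n hn
    have h := hreg n hn
    have hn' : (1 : ℝ) ≤ (n : ℝ) := by exact_mod_cast hn
    nlinarith
  -- Q tends to infinity
  have hQtop : Tendsto Q atTop atTop := by
    refine tendsto_atTop_mono' atTop ?_
      ((tendsto_natCast_atTop_atTop (R := ℝ)).atTop_div_const hC)
    filter_upwards [eventually_ge_atTop 1] with n hn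
    rw [div_le_iff₀ hC]
    have := hreg n hn
    nlinarith
  -- a is bounded
  obtain ⟨M, hM⟩ := halim.bddAbove_range
  have hM' : ∀ j, a j ≤ M := fun j => hM ⟨j, rfl⟩
  have hM0 : 0 ≤ M := le_trans (ha 0) (hM' 0)
  rw [Metric.tendsto_atTop]
  intro ε hε
  set ε' : ℝ := ε / (4 * (C * q 0 + 1)) with hε'def
  have hden : 0 < 4 * (C * q 0 + 1) := by nlinarith
  have hε' : 0 < ε' := div_pos hε hden
  have hε'eq : ε' * (4 * (C * q 0 + 1)) = ε := div_mul_cancel₀ ε (ne_of_gt hden)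
  obtain ⟨N0, hN0⟩ := Metric.tendsto_atTop.1 halim ε' hε'
  have hN0' : ∀ j, N0 ≤ j → a j ≤ ε' := by
    intro j hj
    have := hN0 j hj
    rw [Real.dist_eq, sub_zero, abs_of_nonneg (ha j)] at this
    linarith
  set K : ℝ := q 0 * (N0 : ℝ) ^ 2 * M with hKdef
  have hK0 : 0 ≤ K := by positivity
  set B : ℝ := (2 * K + 2) / ε with hBdef
  obtain ⟨N1, hN1⟩ := (hQtop.eventually_ge_atTop B).exists_forall_of_atTop
  refine ⟨max N1 (N0 + 3), fun n hn => ?_⟩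
  have hn1 : N1 ≤ n := le_trans (le_max_left _ _) hn
  have hn3 : N0 + 3 ≤ n := le_trans (le_max_right _ _) hn
  have hQn : 0 < Q n := hQpos n (by omega)
  have hQB : B ≤ Q n := hN1 n hn1
  have hQε : 2 * K + 2 ≤ Q n * ε := by
    have := (div_le_iff₀ hε).1 hQB
    linarith
  -- diffs nonneg
  have hdiff : ∀ j : ℕ, 0 ≤ q (n - j - 1) - q (n - j) := by
    intro j
    have : q (n - j) ≤ q (n - j - 1) := hanti (by omega)
    linarith
  have hdiffle : ∀ j : ℕ, q (n - j - 1) - q (n - j) ≤ q 0 := by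
    intro j
    have h1 : q (n - j - 1) ≤ q 0 := hanti (Nat.zero_le _)
    have h2 : 0 ≤ q (n - j) := hq _
    linarith
  -- rewrite Icc as Ioc
  have hIcc : Finset.Icc 1 (n - 2) = Finset.Ioc 0 (n - 2) := by
    ext x; simp; omega
  -- split sum
  have hsplit :
      (∑ j ∈ Finset.Ioc 0 N0, (q (n - j - 1) - q (n - j)) * (j : ℝ) * a j)
        + (∑ j ∈ Finset.Ioc N0 (n - 2), (q (n - j - 1) - q (n - j)) * (j : ℝ) * a j)
      = ∑ j ∈ Finset.Ioc 0 (n - 2), (q (n - j - 1) - q (n - j)) * (j : ℝ) * a j :=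
    Finset.sum_Ioc_consecutive _ (Nat.zero_le _) (by omega)
  set S1 : ℝ := ∑ j ∈ Finset.Ioc 0 N0, (q (n - j - 1) - q (n - j)) * (j : ℝ) * a j with hS1def
  set S2 : ℝ := ∑ j ∈ Finset.Ioc N0 (n - 2), (q (n - j - 1) - q (n - j)) * (j : ℝ) * a j
    with hS2def
  -- bound S1
  have hS1 : S1 ≤ K := by
    calc S1 ≤ ∑ j ∈ Finset.Ioc 0 N0, q 0 * (N0 : ℝ) * M := by
          apply Finset.sum_le_sum
          intro j hj
          simp only [Finset.mem_Ioc] at hj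
          have hjN : (j : ℝ) ≤ (N0 : ℝ) := by exact_mod_cast hj.2
          have hj0 : (0 : ℝ) ≤ (j : ℝ) := by positivity
          have h1 : (q (n - j - 1) - q (n - j)) * (j : ℝ) ≤ q 0 * (N0 : ℝ) :=
            mul_le_mul (hdiffle j) hjN hj0 hq0.le
          exact mul_le_mul h1 (hM' j) (ha j) (by positivity)
      _ = (N0 : ℝ) * (q 0 * (N0 : ℝ) * M) := by
          rw [Finset.sum_const, Nat.card_Ioc]
          simp
      _ = K := by ring
  -- bound S2
  have htel : ∑ j ∈ Finset.Ioc N0 (n - 2), (q (n - j - 1) - q (n - j)) ≤ q 0 := by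
    rw [tele_eq q n (n - 2) N0 (by omega) (by omega)]
    have h1 : q (n - (n - 2) - 1) ≤ q 0 := hanti (Nat.zero_le _)
    have h2 : 0 ≤ q (n - N0 - 1) := hq _
    linarith
  have hS2 : S2 ≤ q 0 * ((n : ℝ) * ε') := by
    calc S2 ≤ ∑ j ∈ Finset.Ioc N0 (n - 2), (q (n - j - 1) - q (n - j)) * ((n : ℝ) * ε') := by
          apply Finset.sum_le_sum
          intro j hj
          simp only [Finset.mem_Ioc] at hj
          have hjn : (j : ℝ) ≤ (n : ℝ) := by exact_mod_cast le_trans hj.2 (by omega)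
          have haj : a j ≤ ε' := hN0' j (by omega)
          have hj0 : (0 : ℝ) ≤ (j : ℝ) := by positivity
          have h1 : (j : ℝ) * a j ≤ (n : ℝ) * ε' :=
            mul_le_mul hjn haj (ha j) (by positivity)
          rw [mul_assoc]
          exact mul_le_mul_of_nonneg_left h1 (hdiff j)
      _ = (∑ j ∈ Finset.Ioc N0 (n - 2), (q (n - j - 1) - q (n - j))) * ((n : ℝ) * ε') := by
          rw [Finset.sum_mul]
      _ ≤ q 0 * ((n : ℝ) * ε') := by
          apply mul_le_mul_of_nonneg_right htel
          positivity
  have hnC : (n : ℝ) ≤ C * Q n := hreg n (by omega)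
  have hS2' : S2 ≤ ε / 4 * Q n := by
    have h1 : q 0 * ((n : ℝ) * ε') ≤ q 0 * (C * Q n * ε') := by
      apply mul_le_mul_of_nonneg_left _ hq0.le
      exact mul_le_mul_of_nonneg_right hnC hε'.le
    have h2 : q 0 * (C * Q n * ε') ≤ ε / 4 * Q n := by
      nlinarith [hQn.le, hε'.le]
    linarith
  have han : a n ≤ ε' := hN0' n (by omega)
  have h3 : q 0 * (n : ℝ) * a n ≤ ε / 4 * Q n := by
    have h1 : q 0 * (n : ℝ) * a n ≤ q 0 * (C * Q n) * ε' := by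
      have h0 : (n : ℝ) * a n ≤ (C * Q n) * ε' :=
        mul_le_mul hnC han (ha n) (by positivity)
      calc q 0 * (n : ℝ) * a n = q 0 * ((n : ℝ) * a n) := by ring
        _ ≤ q 0 * ((C * Q n) * ε') := mul_le_mul_of_nonneg_left h0 hq0.le
        _ = q 0 * (C * Q n) * ε' := by ring
    have h2 : q 0 * (C * Q n) * ε' ≤ ε / 4 * Q n := by
      nlinarith [hQn.le, hε'.le]
    linarith
  -- assemble
  have hfn :
      (1 / Q n) * (∑ j ∈ Finset.Icc 1 (n - 2), (q (n - j - 1) - q (n - j)) * (j : ℝ) * a j)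
          + (q 0 * (n : ℝ) / Q n) * a n
        = (S1 + S2 + q 0 * (n : ℝ) * a n) / Q n := by
    have key : ∀ X : ℝ, (1 / Q n) * X + (q 0 * (n : ℝ) / Q n) * a n
        = (X + q 0 * (n : ℝ) * a n) / Q n := by
      intro X
      field_simp
    rw [hIcc, ← hsplit, key]
  have hnonneg :
      0 ≤ (S1 + S2 + q 0 * (n : ℝ) * a n) / Q n := by
    apply div_nonneg _ hQn.le
    have hS1n : 0 ≤ S1 := Finset.sum_nonneg fun j _ =>
      mul_nonneg (mul_nonneg (hdiff j) (by positivity)) (ha j)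
    have hS2n : 0 ≤ S2 := Finset.sum_nonneg fun j _ =>
      mul_nonneg (mul_nonneg (hdiff j) (by positivity)) (ha j)
    have : 0 ≤ q 0 * (n : ℝ) * a n := mul_nonneg (mul_nonneg hq0.le (Nat.cast_nonneg n)) (ha n)
    linarith
  rw [Real.dist_eq, sub_zero, hfn, abs_of_nonneg hnonneg, div_lt_iff₀ hQn]
  linarith
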